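/- arXiv:1803.10302 — 4 statements merged into one kernel-verified Lean document; each statement's English description precedes it below -/
import Mathlib

section
/- For the weight w(x) = ∏_{α∈R} |⟨α,x⟩|^{k(α)} associated with a normalized root system R and nonnegative multiplicity k, there is a constant C > 0 such that for all x ∈ ℝ^N and r > 0, C^{-1} r^N ∏_{α∈R}(|⟨x,α⟩| + r)^{k(α)} ≤ w(B(x,r)) ≤ C r^N ∏_{α∈R}(|⟨x,α⟩| + r)^{k(α)}. -/
/-!
On `B(x, r)` every factor satisfies `|⟪α, y⟫| ≤ max 1 ‖α‖ * (|⟪x, α⟫| + r)`, and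
`|B(x, r)| = r ^ N * |B(0, 1)|`; this is the upper bound. For the lower bound, a point `y` of
`B(x, r)` with `|⟪α, y⟫| < c * (|⟪x, α⟫| + r)` forces `|⟪x, α⟫| = O(r)`, so it lies in a slab of
width `O(c r)` orthogonal to `α`, which meets the ball in volume `O(c r ^ N)`. For `c` small the
finitely many such bad sets cover at most half of the ball, and on the remaining half
`w ≥ ∏ α ∈ R, (c * (|⟪x, α⟫| + r)) ^ k α`.
-/

open MeasureTheory Metric Finset Module
open scoped RealInnerProductSpace

section

variable {E : Type*} [NormedAddCommGroup E] [InnerProductSpace ℝ E]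

theorem abs_inner_sub_inner_le_of_mem_ball {α x y : E} {r : ℝ} (hy : y ∈ ball x r) :
    |⟪α, y⟫ - ⟪α, x⟫| ≤ ‖α‖ * r := by
  rw [← inner_sub_right]
  exact (abs_real_inner_le_norm _ _).trans
    (mul_le_mul_of_nonneg_left (mem_ball_iff_norm.1 hy).le (norm_nonneg _))

theorem abs_inner_lt_of_mem_ball_of_abs_inner_lt {α x y : E} {r c : ℝ} (hy : y ∈ ball x r)
    (hc : c ≤ 1 / 2) (hyc : |⟪α, y⟫| < c * (|⟪x, α⟫| + r)) :
    |⟪α, y⟫| < 2 * c * (‖α‖ + 1) * r := by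
  have hr : 0 < r := pos_of_mem_ball hy
  rw [real_inner_comm α x] at hyc
  have hc0 : 0 < c := pos_of_mul_pos_left ((abs_nonneg _).trans_lt hyc) (by positivity)
  have hx : |⟪α, x⟫| ≤ (2 * ‖α‖ + 1) * r := by
    have hxy := abs_sub_abs_le_abs_sub ⟪α, x⟫ ⟪α, y⟫
    rw [abs_sub_comm] at hxy
    nlinarith [abs_nonneg ⟪α, x⟫, abs_inner_sub_inner_le_of_mem_ball (α := α) hy]
  calc |⟪α, y⟫| < c * (|⟪α, x⟫| + r) := hyc
    _ ≤ c * ((2 * ‖α‖ + 1) * r + r) := by gcongr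
    _ = 2 * c * (‖α‖ + 1) * r := by ring

noncomputable def dunklWeight (R : Finset E) (k : E → ℝ) (y : E) : ℝ :=
  ∏ α ∈ R, |⟪α, y⟫| ^ k α

variable {R : Finset E} {k : E → ℝ}

theorem dunklWeight_nonneg (y : E) : 0 ≤ dunklWeight R k y := by
  unfold dunklWeight
  positivity

theorem continuous_dunklWeight (hk : ∀ α ∈ R, 0 ≤ k α) : Continuous (dunklWeight R k) :=
  continuous_finsetProd R fun α hα =>
    (Real.continuous_rpow_const (hk α hα)).comp (continuous_const.inner continuous_id).abs

theorem dunklWeight_le_of_mem_ball (hk : ∀ α ∈ R, 0 ≤ k α) {x y : E} {r : ℝ}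
    (hy : y ∈ ball x r) :
    dunklWeight R k y ≤ (∏ α ∈ R, max 1 ‖α‖ ^ k α) * ∏ α ∈ R, (|⟪x, α⟫| + r) ^ k α := by
  have hr : 0 < r := pos_of_mem_ball hy
  rw [dunklWeight, ← prod_mul_distrib]
  refine prod_le_prod (fun α _ => by positivity) fun α hα => ?_
  rw [← Real.mul_rpow (by positivity) (by positivity)]
  refine Real.rpow_le_rpow (abs_nonneg _) ?_ (hk α hα)
  rw [real_inner_comm α x]
  calc |⟪α, y⟫| ≤ 1 * |⟪α, x⟫| + ‖α‖ * r := by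
        linarith [abs_sub_abs_le_abs_sub ⟪α, y⟫ ⟪α, x⟫,
          abs_inner_sub_inner_le_of_mem_ball (α := α) hy]
    _ ≤ max 1 ‖α‖ * (|⟪α, x⟫| + r) := by
        rw [mul_add]
        gcongr
        exacts [le_max_left _ _, le_max_right _ _]

theorem mul_le_dunklWeight (hk : ∀ α ∈ R, 0 ≤ k α) {x y : E} {r c : ℝ} (hc : 0 ≤ c)
    (hr : 0 ≤ r) (hy : ∀ α ∈ R, c * (|⟪x, α⟫| + r) ≤ |⟪α, y⟫|) :
    (∏ α ∈ R, c ^ k α) * ∏ α ∈ R, (|⟪x, α⟫| + r) ^ k α ≤ dunklWeight R k y := by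
  rw [dunklWeight, ← prod_mul_distrib]
  refine prod_le_prod (fun α _ => by positivity) fun α hα => ?_
  rw [← Real.mul_rpow hc (by positivity)]
  exact Real.rpow_le_rpow (by positivity) (hy α hα) (hk α hα)

variable [FiniteDimensional ℝ E] [MeasurableSpace E] [BorelSpace E]

theorem volume_real_ball_of_pos (x : E) {r : ℝ} (hr : 0 < r) :
    volume.real (ball x r) = r ^ finrank ℝ E * volume.real (ball (0 : E) 1) := by
  rw [measureReal_def, Measure.addHaar_ball_of_pos volume x hr, ENNReal.toReal_mul,
    ENNReal.toReal_ofReal (by positivity), measureReal_def]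

theorem volume_real_ball_pos (x : E) {r : ℝ} (hr : 0 < r) : 0 < volume.real (ball x r) :=
  ENNReal.toReal_pos (measure_ball_pos volume x hr).ne' measure_ball_lt_top.ne

theorem volume_ball_inter_slab_le {e : E} (he : e ≠ 0) (x : E) {r : ℝ} (hr : 0 < r) (δ : ℝ) :
    volume {y ∈ ball x r | |⟪e, y⟫| < δ} ≤
      ENNReal.ofReal (δ / (‖e‖ * r) * (2 * r) ^ finrank ℝ E) := by
  obtain ⟨m, hm⟩ : ∃ m, finrank ℝ E = m + 1 :=
    Nat.exists_eq_add_one.2 (finrank_pos_iff_exists_ne_zero.2 ⟨e, he⟩)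
  have hu : Orthonormal ℝ (({0} : Set (Fin (m + 1))).domRestrict fun _ => ‖e‖⁻¹ • e) := by
    rw [orthonormal_iff_ite]
    rintro ⟨i, hi⟩ ⟨j, hj⟩
    rw [Set.mem_singleton_iff] at hi hj
    subst hi hj
    rw [if_pos rfl, Set.domRestrict_apply, real_inner_self_eq_norm_sq, norm_smul, norm_inv,
      norm_norm, inv_mul_cancel₀ (norm_ne_zero_iff.2 he), one_pow]
  -- In the coordinates of an orthonormal basis starting with `e / ‖e‖`, the set lies in a box
  -- with one side of length `2 δ / ‖e‖` and all others of length `2 r`.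
  obtain ⟨b, hb⟩ := hu.exists_orthonormalBasis_extension_of_card_eq (by simpa using hm)
  have hb0 : b 0 = ‖e‖⁻¹ • e := hb 0 rfl
  let lo : Fin (m + 1) → ℝ := Fin.cons (-(δ / ‖e‖)) fun i => ⟪b i.succ, x⟫ - r
  let hi : Fin (m + 1) → ℝ := Fin.cons (δ / ‖e‖) fun i => ⟪b i.succ, x⟫ + r
  have hsub : {y ∈ ball x r | |⟪e, y⟫| < δ} ⊆
      (fun y => WithLp.ofLp (b.repr y)) ⁻¹' Set.univ.pi fun i => Set.Ioo (lo i) (hi i) := by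
    rintro y ⟨hy, hδ⟩
    refine Set.mem_univ_pi.2 (Fin.cases ?_ fun i => ?_)
    · have : |⟪b 0, y⟫| < δ / ‖e‖ := by
        rwa [hb0, real_inner_smul_left, abs_mul, abs_inv, abs_norm,
          inv_mul_lt_iff₀ (norm_pos_iff.2 he), mul_div_cancel₀ _ (norm_ne_zero_iff.2 he)]
      simpa [lo, hi, b.repr_apply_apply, abs_lt] using this
    · have : |⟪b i.succ, y - x⟫| < r :=
        (abs_real_inner_le_norm _ _).trans_lt (by simpa [b.norm_eq_one, ← dist_eq_norm] using hy)
      rw [inner_sub_right, abs_sub_lt_iff] at this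
      simp only [lo, hi, Fin.cons_succ, Set.mem_Ioo, b.repr_apply_apply]
      constructor <;> linarith
  have hφ : MeasurePreserving (fun y => WithLp.ofLp (b.repr y)) :=
    (PiLp.volume_preserving_ofLp _).comp b.measurePreserving_repr
  calc volume {y ∈ ball x r | |⟪e, y⟫| < δ}
      ≤ volume (Set.univ.pi fun i => Set.Ioo (lo i) (hi i)) :=
        (measure_mono hsub).trans_eq (hφ.measure_preimage
          (MeasurableSet.univ_pi fun _ => measurableSet_Ioo).nullMeasurableSet)
    _ = ENNReal.ofReal (2 * δ / ‖e‖) * ENNReal.ofReal (2 * r) ^ m := by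
        rw [Real.volume_pi_Ioo, Fin.prod_univ_succ]
        simp only [lo, hi, Fin.cons_zero, Fin.cons_succ, add_sub_sub_cancel, prod_const,
          card_univ, Fintype.card_fin]
        ring_nf
    _ = ENNReal.ofReal (δ / (‖e‖ * r) * (2 * r) ^ finrank ℝ E) := by
        rw [← ENNReal.ofReal_pow (by positivity), ← ENNReal.ofReal_mul' (by positivity), hm]
        congr 1
        field_simp
        ring

theorem volume_ball_inter_abs_inner_lt_le {α : E} (hα : α ≠ 0) (x : E) {r c : ℝ} (hr : 0 < r)
    (hc : c ≤ 1 / 2) :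
    volume {y ∈ ball x r | |⟪α, y⟫| < c * (|⟪x, α⟫| + r)} ≤
      ENNReal.ofReal (c * (2 * (‖α‖ + 1) / ‖α‖) * (2 * r) ^ finrank ℝ E) := by
  calc volume {y ∈ ball x r | |⟪α, y⟫| < c * (|⟪x, α⟫| + r)}
      ≤ volume {y ∈ ball x r | |⟪α, y⟫| < 2 * c * (‖α‖ + 1) * r} :=
        measure_mono fun y ⟨hy, hyc⟩ => ⟨hy, abs_inner_lt_of_mem_ball_of_abs_inner_lt hy hc hyc⟩
    _ ≤ _ := volume_ball_inter_slab_le hα x hr _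
    _ = _ := by
        congr 2
        field_simp

theorem exists_volume_ball_le_two_mul_volume_good (hR : ∀ α ∈ R, α ≠ 0) :
    ∃ c > 0, ∀ (x : E) (r : ℝ), 0 < r → volume.real (ball x r) ≤
      2 * volume.real {y ∈ ball x r | ∀ α ∈ R, c * (|⟪x, α⟫| + r) ≤ |⟪α, y⟫|} := by
  set n := finrank ℝ E
  set v := volume.real (ball (0 : E) 1)
  have hv : 0 < v := volume_real_ball_pos 0 one_pos
  set K := ∑ α ∈ R, 2 * (‖α‖ + 1) / ‖α‖
  obtain ⟨c₀, hc₀, hKc₀⟩ := exists_pos_mul_lt (half_pos hv) (K * 2 ^ n)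
  set c := min c₀ (1 / 2)
  have hc : 0 < c := lt_min hc₀ one_half_pos
  refine ⟨c, hc, fun x r hr => ?_⟩
  set bad : E → Set E := fun α => {y ∈ ball x r | |⟪α, y⟫| < c * (|⟪x, α⟫| + r)}
  have hcover : ball x r ⊆
      {y ∈ ball x r | ∀ α ∈ R, c * (|⟪x, α⟫| + r) ≤ |⟪α, y⟫|} ∪ ⋃ α ∈ R, bad α := by
    intro y hy
    by_cases hgood : ∀ α ∈ R, c * (|⟪x, α⟫| + r) ≤ |⟪α, y⟫|
    · exact Or.inl ⟨hy, hgood⟩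
    · obtain ⟨α, hα, hlt⟩ : ∃ α ∈ R, |⟪α, y⟫| < c * (|⟪x, α⟫| + r) := by simpa using hgood
      exact Or.inr (Set.mem_biUnion hα ⟨hy, hlt⟩)
  have hbad : ∑ α ∈ R, volume.real (bad α) ≤ volume.real (ball x r) / 2 := by
    calc ∑ α ∈ R, volume.real (bad α)
        ≤ ∑ α ∈ R, c * (2 * (‖α‖ + 1) / ‖α‖) * (2 * r) ^ n :=
          sum_le_sum fun α hα => ENNReal.toReal_le_of_le_ofReal (by positivity)
            (volume_ball_inter_abs_inner_lt_le (hR α hα) x hr (min_le_right _ _))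
      _ = K * 2 ^ n * c * r ^ n := by rw [← sum_mul, ← mul_sum, mul_pow]; ring
      _ ≤ v / 2 * r ^ n := by
          gcongr
          exact (mul_le_mul_of_nonneg_left (min_le_left _ _) (by positivity)).trans hKc₀.le
      _ = volume.real (ball x r) / 2 := by rw [volume_real_ball_of_pos x hr]; ring
  have hfin : volume ({y ∈ ball x r | ∀ α ∈ R, c * (|⟪x, α⟫| + r) ≤ |⟪α, y⟫|} ∪
      ⋃ α ∈ R, bad α) ≠ ⊤ :=
    measure_ne_top_of_subset (Set.union_subset (fun y hy => hy.1)
      (Set.iUnion₂_subset fun α _ y hy => hy.1)) measure_ball_lt_top.ne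
  have := (measureReal_mono hcover hfin).trans ((measureReal_union_le _ _).trans
    (add_le_add le_rfl ((measureReal_biUnion_finset_le R bad).trans hbad)))
  linarith

theorem integral_ball_dunklWeight_le (hk : ∀ α ∈ R, 0 ≤ k α) (x : E) {r : ℝ} (hr : 0 < r) :
    ∫ y in ball x r, dunklWeight R k y ≤
      (volume.real (ball (0 : E) 1) * ∏ α ∈ R, max 1 ‖α‖ ^ k α) *
        (r ^ finrank ℝ E * ∏ α ∈ R, (|⟪x, α⟫| + r) ^ k α) := by
  have hbound : ∀ y ∈ ball x r, ‖dunklWeight R k y‖ ≤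
      (∏ α ∈ R, max 1 ‖α‖ ^ k α) * ∏ α ∈ R, (|⟪x, α⟫| + r) ^ k α := fun y hy => by
    rw [Real.norm_of_nonneg (dunklWeight_nonneg y)]
    exact dunklWeight_le_of_mem_ball hk hy
  calc ∫ y in ball x r, dunklWeight R k y
      ≤ ‖∫ y in ball x r, dunklWeight R k y‖ := Real.le_norm_self _
    _ ≤ _ := norm_setIntegral_le_of_norm_le_const measure_ball_lt_top hbound
    _ = _ := by rw [volume_real_ball_of_pos x hr]; ring

theorem exists_mul_le_integral_ball_dunklWeight (hR : ∀ α ∈ R, α ≠ 0) (hk : ∀ α ∈ R, 0 ≤ k α) :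
    ∃ A > 0, ∀ (x : E) (r : ℝ), 0 < r →
      A * (r ^ finrank ℝ E * ∏ α ∈ R, (|⟪x, α⟫| + r) ^ k α) ≤
        ∫ y in ball x r, dunklWeight R k y := by
  obtain ⟨c, hc, hgood⟩ := exists_volume_ball_le_two_mul_volume_good hR
  refine ⟨volume.real (ball (0 : E) 1) / 2 * ∏ α ∈ R, c ^ k α,
    mul_pos (half_pos (volume_real_ball_pos 0 one_pos))
      (prod_pos fun α _ => Real.rpow_pos_of_pos hc _), fun x r hr => ?_⟩
  set G := {y ∈ ball x r | ∀ α ∈ R, c * (|⟪x, α⟫| + r) ≤ |⟪α, y⟫|}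
  have hG : MeasurableSet G := by
    have : G = ball x r ∩ ⋂ α ∈ R, {y | c * (|⟪x, α⟫| + r) ≤ |⟪α, y⟫|} := by ext; simp [G]
    rw [this]
    exact measurableSet_ball.inter (isClosed_biInter fun α _ =>
      isClosed_le continuous_const (continuous_const.inner continuous_id).abs).measurableSet
  have hint : IntegrableOn (dunklWeight R k) (ball x r) :=
    ((continuous_dunklWeight hk).locallyIntegrable.integrableOn_isCompact
      (isCompact_closedBall x r)).mono_set ball_subset_closedBall
  calc (volume.real (ball (0 : E) 1) / 2 * ∏ α ∈ R, c ^ k α) *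
        (r ^ finrank ℝ E * ∏ α ∈ R, (|⟪x, α⟫| + r) ^ k α)
      = ((∏ α ∈ R, c ^ k α) * ∏ α ∈ R, (|⟪x, α⟫| + r) ^ k α) *
          (volume.real (ball x r) / 2) := by
        rw [volume_real_ball_of_pos x hr]; ring
    _ ≤ ((∏ α ∈ R, c ^ k α) * ∏ α ∈ R, (|⟪x, α⟫| + r) ^ k α) * volume.real G := by
        gcongr
        linarith [hgood x r hr]
    _ ≤ ∫ y in G, dunklWeight R k y :=
        setIntegral_ge_of_const_le_real hG (measure_ne_top_of_subset (fun y hy => hy.1)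
          measure_ball_lt_top.ne) (fun y hy => mul_le_dunklWeight hk hc.le hr.le hy.2)
          (hint.mono_set fun y hy => hy.1)
    _ ≤ ∫ y in ball x r, dunklWeight R k y :=
        setIntegral_mono_set hint (Filter.Eventually.of_forall dunklWeight_nonneg)
          (Filter.Eventually.of_forall fun y hy => hy.1)

end

theorem dunkl_measure_ball_comparable_general (N : ℕ) (R : Finset (EuclideanSpace ℝ (Fin N)))
    (hR0 : ∀ α ∈ R, α ≠ 0)
    (k : EuclideanSpace ℝ (Fin N) → ℝ) (hk : ∀ α ∈ R, 0 ≤ k α)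
    (w : EuclideanSpace ℝ (Fin N) → ℝ)
    (hw : ∀ x, w x = ∏ α ∈ R, |⟪α, x⟫| ^ (k α)) :
    ∃ C : ℝ, 0 < C ∧ ∀ (x : EuclideanSpace ℝ (Fin N)) (r : ℝ), 0 < r →
      C⁻¹ * (r ^ N * ∏ α ∈ R, (|⟪x, α⟫| + r) ^ (k α)) ≤ (∫ y in ball x r, w y) ∧
      (∫ y in ball x r, w y) ≤ C * (r ^ N * ∏ α ∈ R, (|⟪x, α⟫| + r) ^ (k α)) := by
  obtain ⟨A, hA, hlower⟩ := exists_mul_le_integral_ball_dunklWeight hR0 hk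
  set B := volume.real (ball (0 : EuclideanSpace ℝ (Fin N)) 1) * ∏ α ∈ R, max 1 ‖α‖ ^ k α
  obtain rfl : w = dunklWeight R k := funext hw
  refine ⟨max A⁻¹ B, lt_max_of_lt_left (inv_pos.2 hA), fun x r hr => ?_⟩
  have hscale : 0 ≤ r ^ N * ∏ α ∈ R, (|⟪x, α⟫| + r) ^ k α := by positivity
  constructor
  · calc (max A⁻¹ B)⁻¹ * (r ^ N * ∏ α ∈ R, (|⟪x, α⟫| + r) ^ k α)
        ≤ A * (r ^ N * ∏ α ∈ R, (|⟪x, α⟫| + r) ^ k α) :=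
          mul_le_mul_of_nonneg_right (inv_le_of_inv_le₀ hA (le_max_left _ _)) hscale
      _ ≤ _ := by simpa using hlower x r hr
  · calc ∫ y in ball x r, dunklWeight R k y
        ≤ B * (r ^ N * ∏ α ∈ R, (|⟪x, α⟫| + r) ^ k α) := by
          simpa using integral_ball_dunklWeight_le hk x hr
      _ ≤ _ := mul_le_mul_of_nonneg_right (le_max_right _ _) hscale

/-- Two-sided estimate for the Dunkl-weight measure of Euclidean balls. -/
theorem dunkl_measure_ball_comparable (N : ℕ) (R : Finset (EuclideanSpace ℝ (Fin N)))
    (hR0 : ∀ α ∈ R, α ≠ 0) (hRnorm : ∀ α ∈ R, ‖α‖ = Real.sqrt 2)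
    (hRrefl : ∀ α ∈ R, ∀ β ∈ R, β - ⟪β, α⟫ • α ∈ R)
    (k : EuclideanSpace ℝ (Fin N) → ℝ) (hk : ∀ α ∈ R, 0 ≤ k α)
    (hkinv : ∀ α ∈ R, ∀ β ∈ R, k (β - ⟪β, α⟫ • α) = k β)
    (w : EuclideanSpace ℝ (Fin N) → ℝ)
    (hw : ∀ x, w x = ∏ α ∈ R, |⟪α, x⟫| ^ (k α)) :
    ∃ C : ℝ, 0 < C ∧ ∀ (x : EuclideanSpace ℝ (Fin N)) (r : ℝ), 0 < r →
      C⁻¹ * (r ^ N * ∏ α ∈ R, (|⟪x, α⟫| + r) ^ (k α)) ≤ (∫ y in ball x r, w y) ∧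
      (∫ y in ball x r, w y) ≤ C * (r ^ N * ∏ α ∈ R, (|⟪x, α⟫| + r) ^ (k α)) :=
  dunkl_measure_ball_comparable_general N R hR0 k hk w hw
end

section
/- There is a constant C > 0 such that for all x ∈ ℝ^N and all radii 0 < r₁ < r₂, C^{-1}(r₂/r₁)^N ≤ w(B(x,r₂))/w(B(x,r₁)) ≤ C (r₂/r₁)^{N+2γ}, where γ = (1/2)∑_{α∈R} k(α). -/
open MeasureTheory Metric Finset
open scoped RealInnerProductSpace

/-!
On `ball x r` the weight `∏ |⟪α, ·⟫| ^ k α` is at most `∏ (|⟪α, x⟫| + ‖α‖ r) ^ k α`, and it is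
at least a fixed multiple of this on a ball of radius comparable to `r` inside `ball x r`. That
ball is centred at a point `x + t v`, where `v` lies on no root hyperplane and `0 < t ≲ r` avoids
the finitely many short intervals on which some `⟪α, x + t v⟫` is small. So the weighted measure
of `ball x r` is comparable to `r ^ N ∏ (|⟪α, x⟫| + ‖α‖ r) ^ k α`, which grows at least like
`r ^ N` and at most like `r ^ (N + ∑ k)`.
-/

variable {E : Type*} [NormedAddCommGroup E] [InnerProductSpace ℝ E]

noncomputable def rootWeight (R : Finset E) (k : E → ℝ) (y : E) : ℝ :=
  ∏ α ∈ R, |⟪α, y⟫| ^ k α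

noncomputable def rootWeightScale (R : Finset E) (k : E → ℝ) (x : E) (r : ℝ) : ℝ :=
  ∏ α ∈ R, (|⟪α, x⟫| + ‖α‖ * r) ^ k α

lemma abs_inner_sub_inner_le (α y z : E) : |⟪α, y⟫ - ⟪α, z⟫| ≤ ‖α‖ * dist y z := by
  rw [← inner_sub_right, dist_eq_norm]
  exact abs_real_inner_le_norm α (y - z)

section Weight

variable {R : Finset E} {k : E → ℝ}

lemma rootWeight_nonneg (y : E) : 0 ≤ rootWeight R k y :=
  prod_nonneg fun _ _ => Real.rpow_nonneg (abs_nonneg _) _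

lemma continuous_rootWeight (hk : ∀ α ∈ R, 0 ≤ k α) : Continuous (rootWeight R k) :=
  continuous_finsetProd R fun α hα =>
    (continuous_const.inner continuous_id).abs.rpow_const fun _ => Or.inr (hk α hα)

lemma rootWeightScale_pos (hR : ∀ α ∈ R, α ≠ 0) (x : E) {r : ℝ} (hr : 0 < r) :
    0 < rootWeightScale R k x r :=
  prod_pos fun α hα =>
    Real.rpow_pos_of_pos (by have := norm_pos_iff.2 (hR α hα); positivity) _

lemma rootWeight_le_rootWeightScale (hk : ∀ α ∈ R, 0 ≤ k α) {x y : E} {r : ℝ}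
    (hy : dist y x ≤ r) : rootWeight R k y ≤ rootWeightScale R k x r := by
  refine prod_le_prod (fun _ _ => Real.rpow_nonneg (abs_nonneg _) _) fun α hα => ?_
  refine Real.rpow_le_rpow (abs_nonneg _) ?_ (hk α hα)
  have := abs_inner_sub_inner_le α y x
  have := mul_le_mul_of_nonneg_left hy (norm_nonneg α)
  have := abs_sub_abs_le_abs_sub ⟪α, y⟫ ⟪α, x⟫
  linarith

lemma rootWeightScale_mono (hk : ∀ α ∈ R, 0 ≤ k α) (x : E) {r₁ r₂ : ℝ} (hr₁ : 0 ≤ r₁)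
    (h : r₁ ≤ r₂) : rootWeightScale R k x r₁ ≤ rootWeightScale R k x r₂ :=
  prod_le_prod (fun _ _ => by positivity) fun α hα =>
    Real.rpow_le_rpow (by positivity) (by gcongr) (hk α hα)

lemma rootWeightScale_le_rpow_mul (hk : ∀ α ∈ R, 0 ≤ k α) (x : E) {r₁ r₂ : ℝ} (hr₁ : 0 < r₁)
    (h : r₁ ≤ r₂) :
    rootWeightScale R k x r₂ ≤ (r₂ / r₁) ^ (∑ α ∈ R, k α) * rootWeightScale R k x r₁ := by
  have hq : 1 ≤ r₂ / r₁ := (one_le_div hr₁).2 h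
  have hr₂ : 0 < r₂ := hr₁.trans_le h
  rw [Real.rpow_sum_of_pos (by positivity), rootWeightScale, rootWeightScale,
    ← prod_mul_distrib]
  refine prod_le_prod (fun _ _ => by positivity) fun α hα => ?_
  rw [← Real.mul_rpow (by positivity) (by positivity)]
  refine Real.rpow_le_rpow (by positivity) ?_ (hk α hα)
  have := le_mul_of_one_le_left (abs_nonneg ⟪α, x⟫) hq
  calc |⟪α, x⟫| + ‖α‖ * r₂ = |⟪α, x⟫| + r₂ / r₁ * (‖α‖ * r₁) := by field_simp
    _ ≤ r₂ / r₁ * (|⟪α, x⟫| + ‖α‖ * r₁) := by linarith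

lemma mul_add_le_abs_inner {α x y z : E} {δ r : ℝ} (hδ₀ : 0 ≤ δ) (hδ₁ : δ ≤ 1)
    (hzx : dist z x ≤ r / 2) (hz : δ * (‖α‖ * r) ≤ |⟪α, z⟫|) (hyz : dist y z < δ / 2 * r) :
    δ / 6 * (|⟪α, x⟫| + ‖α‖ * r) ≤ |⟪α, y⟫| := by
  have hr : 0 < r := by nlinarith [dist_nonneg (x := y) (y := z)]
  have hyx : dist y x ≤ r := by linarith [dist_triangle y z x, mul_le_of_le_one_left hr.le hδ₁]
  have hnear_z : δ / 2 * (‖α‖ * r) ≤ |⟪α, y⟫| := by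
    have := abs_inner_sub_inner_le α y z
    have := mul_le_mul_of_nonneg_left hyz.le (norm_nonneg α)
    have := abs_sub_abs_le_abs_sub ⟪α, z⟫ ⟪α, y⟫
    rw [abs_sub_comm] at this
    nlinarith
  have hnear_x : |⟪α, x⟫| - ‖α‖ * r ≤ |⟪α, y⟫| := by
    have := abs_inner_sub_inner_le α y x
    have := mul_le_mul_of_nonneg_left hyx (norm_nonneg α)
    have := abs_sub_abs_le_abs_sub ⟪α, x⟫ ⟪α, y⟫
    rw [abs_sub_comm] at this
    linarith
  have hs : 0 ≤ ‖α‖ * r := by positivity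
  rcases le_total |⟪α, x⟫| (2 * (‖α‖ * r)) with h | h
  · nlinarith
  · nlinarith

lemma rpow_mul_rootWeightScale_le_rootWeight (hk : ∀ α ∈ R, 0 ≤ k α) {x y z : E} {δ r : ℝ}
    (hδ₀ : 0 < δ) (hδ₁ : δ ≤ 1) (hzx : dist z x ≤ r / 2)
    (hz : ∀ α ∈ R, δ * (‖α‖ * r) ≤ |⟪α, z⟫|) (hyz : dist y z < δ / 2 * r) :
    (δ / 6) ^ (∑ α ∈ R, k α) * rootWeightScale R k x r ≤ rootWeight R k y := by
  have hr : 0 < r := by nlinarith [dist_nonneg (x := y) (y := z)]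
  rw [Real.rpow_sum_of_pos (by positivity), rootWeightScale, ← prod_mul_distrib]
  refine prod_le_prod (fun _ _ => by positivity) fun α hα => ?_
  rw [← Real.mul_rpow (by positivity) (by positivity)]
  exact Real.rpow_le_rpow (by positivity)
    (mul_add_le_abs_inner hδ₀.le hδ₁ hzx (hz α hα) hyz) (hk α hα)

end Weight

lemma exists_mem_Ioc_forall_le_abs_add_mul {ι : Type*} (s : Finset ι) (a b : ι → ℝ) {L : ℝ}
    (hL : 0 < L) : ∃ t ∈ Set.Ioc 0 L, ∀ i ∈ s, |b i| * (L / (2 * (#s + 1))) ≤ |a i + t * b i| := by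
  set ε := L / (2 * (#s + 1))
  have hε : 0 < ε := by positivity
  have hbad : ∀ i ∈ s, {t | |a i + t * b i| < |b i| * ε} ⊆ ball (-(a i / b i)) ε := by
    intro i _ t ht
    have hb : b i ≠ 0 := by
      rintro hb
      simp only [Set.mem_ofPred_eq, hb, abs_zero, zero_mul, mul_zero, add_zero] at ht
      exact (abs_nonneg _).not_gt ht
    have heq : a i + t * b i = b i * (t - -(a i / b i)) := by field_simp; ring
    rw [Set.mem_ofPred_eq, heq, abs_mul] at ht
    exact lt_of_mul_lt_mul_left ht (abs_nonneg _)
  have hsmall : volume (⋃ i ∈ s, {t | |a i + t * b i| < |b i| * ε}) < volume (Set.Ioc 0 L) := by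
    calc volume (⋃ i ∈ s, {t | |a i + t * b i| < |b i| * ε})
        ≤ ∑ i ∈ s, volume (ball (-(a i / b i)) ε) :=
          (measure_biUnion_finset_le s _).trans (sum_le_sum fun i hi => measure_mono (hbad i hi))
      _ = ENNReal.ofReal (#s * (2 * ε)) := by
          simp only [Real.volume_ball, sum_const, nsmul_eq_mul]
          rw [ENNReal.ofReal_mul (Nat.cast_nonneg _), ENNReal.ofReal_natCast]
      _ < volume (Set.Ioc 0 L) := by
          rw [Real.volume_Ioc, sub_zero, ENNReal.ofReal_lt_ofReal_iff hL]
          have : (#s : ℝ) * (2 * ε) = #s / (#s + 1) * L := by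
            simp only [ε]; field_simp
          rw [this]
          exact mul_lt_of_lt_one_left hL ((div_lt_one (by positivity)).2 (lt_add_one _))
  obtain ⟨t, ht, hgood⟩ := Set.not_subset.1 fun h => (measure_mono h).not_gt hsmall
  refine ⟨t, ht, fun i hi => not_lt.1 fun hlt => hgood (Set.mem_biUnion hi hlt)⟩

lemma exists_forall_inner_ne_zero {R : Finset E} (hR : ∀ α ∈ R, α ≠ 0) :
    ∃ v : E, ∀ α ∈ R, ⟪α, v⟫ ≠ 0 := by
  by_contra! hcover
  obtain ⟨⟨α, hα⟩, htop⟩ := Subspace.exists_eq_top_of_iUnion_eq_univ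
    (p := fun α : R => (ℝ ∙ (α : E))ᗮ) <| Set.eq_univ_of_forall fun v => by
      obtain ⟨α, hα, h⟩ := hcover v
      exact Set.mem_iUnion.2 ⟨⟨α, hα⟩, Submodule.mem_orthogonal_singleton_iff_inner_right.2 h⟩
  exact hR α hα (Submodule.span_singleton_eq_bot.1 ((Submodule.orthogonal_eq_top_iff _).1 htop))

lemma exists_forall_mul_le_abs_inner {R : Finset E} (hR : ∀ α ∈ R, α ≠ 0) :
    ∃ δ : ℝ, 0 < δ ∧ δ ≤ 1 ∧ ∀ (x : E) (r : ℝ), 0 < r →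
      ∃ z, dist z x ≤ r / 2 ∧ ∀ α ∈ R, δ * (‖α‖ * r) ≤ |⟪α, z⟫| := by
  obtain ⟨v, hv⟩ := exists_forall_inner_ne_zero hR
  set K : ℝ := 4 * (‖v‖ + 1) * (#R + 1)
  have hsmall : ∀ᶠ δ in nhds (0 : ℝ), δ < 1 ∧ ∀ α ∈ R, δ * ‖α‖ < |⟪α, v⟫| / K := by
    refine (eventually_lt_nhds one_pos).and ((Filter.eventually_all_finset R).2 fun α hα => ?_)
    have hlim : Filter.Tendsto (fun δ : ℝ => δ * ‖α‖) (nhds 0) (nhds 0) := by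
      simpa using (Filter.tendsto_id (x := nhds (0 : ℝ))).mul_const ‖α‖
    exact hlim.eventually (eventually_lt_nhds (by have := hv α hα; positivity))
  obtain ⟨δ, ⟨hδ₁, hδ⟩, hδ₀⟩ :=
    ((hsmall.filter_mono nhdsWithin_le_nhds).and (self_mem_nhdsWithin (s := Set.Ioi 0))).exists
  refine ⟨δ, hδ₀, hδ₁.le, fun x r hr => ?_⟩
  set L := r / (2 * (‖v‖ + 1))
  obtain ⟨t, ⟨ht₀, htL⟩, ht⟩ :=
    exists_mem_Ioc_forall_le_abs_add_mul R (fun α => ⟪α, x⟫) (fun α => ⟪α, v⟫) (L := L)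
      (by positivity)
  refine ⟨x + t • v, ?_, fun α hα => ?_⟩
  · rw [dist_eq_norm, add_sub_cancel_left, norm_smul, Real.norm_eq_abs, abs_of_pos ht₀]
    calc t * ‖v‖ ≤ L * (‖v‖ + 1) := by gcongr; linarith
      _ = r / 2 := by simp only [L]; field_simp
  · rw [inner_add_right, real_inner_smul_right]
    calc δ * (‖α‖ * r) ≤ |⟪α, v⟫| / K * r := by
          rw [← mul_assoc]; exact mul_le_mul_of_nonneg_right (hδ α hα).le hr.le
      _ = |⟪α, v⟫| * (L / (2 * (#R + 1))) := by simp only [K, L]; field_simp; ring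
      _ ≤ _ := ht α hα

lemma setIntegral_rootWeight_le [FiniteDimensional ℝ E] [MeasurableSpace E] (μ : Measure E)
    [IsFiniteMeasureOnCompacts μ] {R : Finset E} {k : E → ℝ} (hk : ∀ α ∈ R, 0 ≤ k α) (x : E)
    (r : ℝ) :
    ∫ y in ball x r, rootWeight R k y ∂μ ≤ μ.real (ball x r) * rootWeightScale R k x r := by
  refine (Real.le_norm_self _).trans ((norm_setIntegral_le_of_norm_le_const measure_ball_lt_top
    fun y hy => ?_).trans_eq (mul_comm _ _))
  rw [Real.norm_of_nonneg (rootWeight_nonneg y)]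
  exact rootWeight_le_rootWeightScale hk (mem_ball.1 hy).le

section Haar

variable [FiniteDimensional ℝ E] [MeasurableSpace E] [BorelSpace E] (μ : Measure E)
  [μ.IsAddHaarMeasure] {R : Finset E} {k : E → ℝ}

lemma measureReal_ball_of_pos (x : E) {r : ℝ} (hr : 0 < r) :
    μ.real (ball x r) = r ^ Module.finrank ℝ E * μ.real (ball 0 1) := by
  rw [measureReal_def, Measure.addHaar_ball_of_pos μ x hr, ENNReal.toReal_mul,
    ENNReal.toReal_ofReal (by positivity), measureReal_def]

lemma measureReal_ball_eq_div_pow_mul (x : E) {r₁ r₂ : ℝ} (hr₁ : 0 < r₁) (hr₂ : 0 < r₂) :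
    μ.real (ball x r₂) = (r₂ / r₁) ^ Module.finrank ℝ E * μ.real (ball x r₁) := by
  rw [measureReal_ball_of_pos μ x hr₁, measureReal_ball_of_pos μ x hr₂, div_pow]
  field_simp

lemma exists_pos_mul_le_setIntegral_rootWeight (hR : ∀ α ∈ R, α ≠ 0)
    (hk : ∀ α ∈ R, 0 ≤ k α) :
    ∃ c : ℝ, 0 < c ∧ ∀ (x : E) (r : ℝ), 0 < r →
      c * (μ.real (ball x r) * rootWeightScale R k x r) ≤ ∫ y in ball x r, rootWeight R k y ∂μ := by
  obtain ⟨δ, hδ₀, hδ₁, hgood⟩ := exists_forall_mul_le_abs_inner hR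
  refine ⟨(δ / 2) ^ Module.finrank ℝ E * (δ / 6) ^ (∑ α ∈ R, k α), by positivity,
    fun x r hr => ?_⟩
  obtain ⟨z, hzx, hz⟩ := hgood x r hr
  have hsub : ball z (δ / 2 * r) ⊆ ball x r := fun y hy => by
    have := dist_triangle y z x
    have := mul_le_of_le_one_left hr.le hδ₁
    rw [mem_ball] at hy ⊢
    linarith
  have hint : IntegrableOn (rootWeight R k) (ball x r) μ :=
    ((continuous_rootWeight hk).locallyIntegrable.integrableOn_isCompact
      (isCompact_closedBall x r)).mono_set ball_subset_closedBall
  calc (δ / 2) ^ Module.finrank ℝ E * (δ / 6) ^ (∑ α ∈ R, k α) *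
        (μ.real (ball x r) * rootWeightScale R k x r)
      = (δ / 6) ^ (∑ α ∈ R, k α) * rootWeightScale R k x r * μ.real (ball z (δ / 2 * r)) := by
        rw [measureReal_ball_of_pos μ x hr, measureReal_ball_of_pos μ z (by positivity), mul_pow]
        ring
    _ ≤ ∫ y in ball z (δ / 2 * r), rootWeight R k y ∂μ :=
        setIntegral_ge_of_const_le_real measurableSet_ball measure_ball_lt_top.ne
          (fun y hy => rpow_mul_rootWeightScale_le_rootWeight hk hδ₀ hδ₁ hzx hz (mem_ball.1 hy))
          (hint.mono_set hsub)
    _ ≤ ∫ y in ball x r, rootWeight R k y ∂μ :=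
        setIntegral_mono_set hint (Filter.Eventually.of_forall rootWeight_nonneg)
          hsub.eventuallyLE

lemma measureReal_ball_mul_rootWeightScale_ge (hk : ∀ α ∈ R, 0 ≤ k α) (x : E) {r₁ r₂ : ℝ}
    (hr₁ : 0 < r₁) (h : r₁ ≤ r₂) :
    (r₂ / r₁) ^ Module.finrank ℝ E * (μ.real (ball x r₁) * rootWeightScale R k x r₁) ≤
      μ.real (ball x r₂) * rootWeightScale R k x r₂ := by
  rw [measureReal_ball_eq_div_pow_mul μ x hr₁ (hr₁.trans_le h), mul_assoc]
  exact mul_le_mul_of_nonneg_left (mul_le_mul_of_nonneg_left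
    (rootWeightScale_mono hk x hr₁.le h) measureReal_nonneg)
    (pow_nonneg (div_pos (hr₁.trans_le h) hr₁).le _)

lemma measureReal_ball_mul_rootWeightScale_le (hk : ∀ α ∈ R, 0 ≤ k α) (x : E) {r₁ r₂ : ℝ}
    (hr₁ : 0 < r₁) (h : r₁ ≤ r₂) :
    μ.real (ball x r₂) * rootWeightScale R k x r₂ ≤
      (r₂ / r₁) ^ ((Module.finrank ℝ E : ℝ) + ∑ α ∈ R, k α) *
        (μ.real (ball x r₁) * rootWeightScale R k x r₁) := by
  have hq : 0 < r₂ / r₁ := div_pos (hr₁.trans_le h) hr₁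
  rw [Real.rpow_add hq, Real.rpow_natCast,
    measureReal_ball_eq_div_pow_mul μ x hr₁ (hr₁.trans_le h)]
  calc (r₂ / r₁) ^ Module.finrank ℝ E * μ.real (ball x r₁) * rootWeightScale R k x r₂
      ≤ (r₂ / r₁) ^ Module.finrank ℝ E * μ.real (ball x r₁) *
          ((r₂ / r₁) ^ (∑ α ∈ R, k α) * rootWeightScale R k x r₁) := by
        gcongr
        exact rootWeightScale_le_rpow_mul hk x hr₁ h
    _ = _ := by ring

end Haar

lemma ratio_bounds_of_comparable {V₁ V₂ M₁ M₂ c lo hi : ℝ} (hc : 0 < c) (hM₁ : 0 < M₁)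
    (hV₁ : c * M₁ ≤ V₁ ∧ V₁ ≤ M₁) (hV₂ : c * M₂ ≤ V₂ ∧ V₂ ≤ M₂) (hlo₀ : 0 ≤ lo)
    (hlo : lo * M₁ ≤ M₂) (hhi : M₂ ≤ hi * M₁) :
    c * lo ≤ V₂ / V₁ ∧ V₂ / V₁ ≤ c⁻¹ * hi := by
  have hV₁pos : 0 < V₁ := lt_of_lt_of_le (by positivity) hV₁.1
  have hhi₀ : 0 ≤ hi := by nlinarith
  constructor
  · rw [le_div_iff₀ hV₁pos]
    nlinarith [mul_le_mul_of_nonneg_left hV₁.2 (mul_nonneg hc.le hlo₀)]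
  · rw [div_le_iff₀ hV₁pos, mul_assoc, le_inv_mul_iff₀ hc]
    nlinarith [mul_le_mul_of_nonneg_left hV₁.1 hhi₀]

theorem dunkl_measure_growth_general (N : ℕ) (R : Finset (EuclideanSpace ℝ (Fin N)))
    (hR0 : ∀ α ∈ R, α ≠ 0)
    (k : EuclideanSpace ℝ (Fin N) → ℝ) (hk : ∀ α ∈ R, 0 ≤ k α)
    (w : EuclideanSpace ℝ (Fin N) → ℝ)
    (hw : ∀ x, w x = ∏ α ∈ R, |⟪α, x⟫| ^ (k α))
    (γ : ℝ) (hγ : γ = (1 / 2) * ∑ α ∈ R, k α) :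
    ∃ C : ℝ, 0 < C ∧ ∀ (x : EuclideanSpace ℝ (Fin N)) (r₁ r₂ : ℝ), 0 < r₁ → r₁ < r₂ →
      C⁻¹ * (r₂ / r₁) ^ N ≤ (∫ y in ball x r₂, w y) / (∫ y in ball x r₁, w y) ∧
      (∫ y in ball x r₂, w y) / (∫ y in ball x r₁, w y) ≤
        C * (r₂ / r₁) ^ ((N : ℝ) + 2 * γ) := by
  have hw' : w = rootWeight R k := funext hw
  have hdim : Module.finrank ℝ (EuclideanSpace ℝ (Fin N)) = N := finrank_euclideanSpace_fin
  have hγ' : 2 * γ = ∑ α ∈ R, k α := by rw [hγ]; ring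
  obtain ⟨c, hc, hlower⟩ := exists_pos_mul_le_setIntegral_rootWeight volume hR0 hk
  refine ⟨c⁻¹, inv_pos.2 hc, fun x r₁ r₂ hr₁ h => ?_⟩
  rw [inv_inv, hw', hγ']
  have hr₂ := hr₁.trans h
  refine ratio_bounds_of_comparable hc
    (mul_pos (show 0 < volume.real (ball x r₁) from
        ENNReal.toReal_pos (measure_ball_pos volume x hr₁).ne' measure_ball_lt_top.ne)
      (rootWeightScale_pos hR0 x hr₁))
    ⟨hlower x r₁ hr₁, setIntegral_rootWeight_le volume hk x r₁⟩
    ⟨hlower x r₂ hr₂, setIntegral_rootWeight_le volume hk x r₂⟩ (by positivity) ?_ ?_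
  · simpa only [hdim] using measureReal_ball_mul_rootWeightScale_ge volume hk x hr₁ h.le
  · simpa only [hdim] using measureReal_ball_mul_rootWeightScale_le volume hk x hr₁ h.le

/-- Volume growth estimates for the Dunkl measure of balls. -/
theorem dunkl_measure_growth (N : ℕ) (R : Finset (EuclideanSpace ℝ (Fin N)))
    (hR0 : ∀ α ∈ R, α ≠ 0) (hRnorm : ∀ α ∈ R, ‖α‖ = Real.sqrt 2)
    (hRrefl : ∀ α ∈ R, ∀ β ∈ R, β - ⟪β, α⟫ • α ∈ R)
    (k : EuclideanSpace ℝ (Fin N) → ℝ) (hk : ∀ α ∈ R, 0 ≤ k α)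
    (hkinv : ∀ α ∈ R, ∀ β ∈ R, k (β - ⟪β, α⟫ • α) = k β)
    (w : EuclideanSpace ℝ (Fin N) → ℝ)
    (hw : ∀ x, w x = ∏ α ∈ R, |⟪α, x⟫| ^ (k α))
    (γ : ℝ) (hγ : γ = (1 / 2) * ∑ α ∈ R, k α) :
    ∃ C : ℝ, 0 < C ∧ ∀ (x : EuclideanSpace ℝ (Fin N)) (r₁ r₂ : ℝ), 0 < r₁ → r₁ < r₂ →
      C⁻¹ * (r₂ / r₁) ^ N ≤ (∫ y in ball x r₂, w y) / (∫ y in ball x r₁, w y) ∧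
      (∫ y in ball x r₂, w y) / (∫ y in ball x r₁, w y) ≤
        C * (r₂ / r₁) ^ ((N : ℝ) + 2 * γ) :=
  dunkl_measure_growth_general N R hR0 k hk w hw γ hγ
end

section
/- Suppose Φ : ℝ^N → ℝ is a continuous radial function supported in the unit ball B(0,1), and let Φ_t(x) = t^{-𝐍}Φ(x/t). Assume the Rösler formula τ_x Φ_t(−y) = ∫ Φ̃_t(A(x,y,η)) dμ_x(η) for the Dunkl translation of radial functions, and the heat kernel bound h_t(x,y) ≤ C V(x,y,√t)^{-1}(1+‖x−y‖/√t)^{-2}exp(−c d(x,y)²/t). Then there is C' = C'(Φ) > 0 such that |τ_x Φ_t(−y)| ≤ C' V(x,y,t)^{-1} (1 + ‖x−y‖/t)^{-2} for all x,y and t > 0, and moreover τ_x Φ_t(−y) = 0 whenever d(x,y) > t. -/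
/-!
For `η` in the convex hull of the orbit `G·x`, the maximum principle for the linear functional
`⟪y, ·⟫` gives `A(x, y, η)² = ‖x‖² + ‖y‖² - 2⟪y, η⟫ ≥ ‖σx - y‖² ≥ d(x, y)²` for some `σ ∈ G`.
Hence the Rösler integrand `t^{-𝐍} Φ̃(A/t)` vanishes `μ_x`-a.e. once `d(x, y) > t`. In general a
bounded function supported in `[0, 1]` is dominated by a Gaussian, `|Φ̃(r)| ≤ M e^{1/4} e^{-r²/4}`,
so integrating against `μ_x` gives `|τ_x Φ_t(-y)| ≤ K h_{t²}(x, y)`, and the heat kernel bound with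
`exp(-c d²/t²) ≤ 1` finishes the proof.
-/

open MeasureTheory Set
open scoped RealInnerProductSpace

theorem iInf_norm_sub_sq_le_of_mem_convexHull {E ι : Type*} [NormedAddCommGroup E]
    [InnerProductSpace ℝ E] {v : ι → E} {r : ℝ}
    (hv : ∀ i, ‖v i‖ = r) {y η : E} (hη : η ∈ convexHull ℝ (range v)) :
    (⨅ i, ‖v i - y‖) ^ 2 ≤ r ^ 2 + ‖y‖ ^ 2 - 2 * ⟪y, η⟫ := by
  obtain ⟨_, ⟨i, rfl⟩, hi⟩ :=
    ((innerₛₗ ℝ y).convexOn convex_univ).exists_ge_of_mem_convexHull (subset_univ _) hη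
  have hinf : ⨅ j, ‖v j - y‖ ≤ ‖v i - y‖ :=
    ciInf_le ⟨0, by rintro _ ⟨j, rfl⟩; exact norm_nonneg _⟩ i
  have hinf_nonneg : 0 ≤ ⨅ j, ‖v j - y‖ := Real.iInf_nonneg fun j => norm_nonneg _
  calc (⨅ j, ‖v j - y‖) ^ 2 ≤ ‖v i - y‖ ^ 2 := by gcongr
    _ = r ^ 2 + ‖y‖ ^ 2 - 2 * ⟪y, v i⟫ := by rw [norm_sub_sq_real, hv, real_inner_comm]; ring
    _ ≤ r ^ 2 + ‖y‖ ^ 2 - 2 * ⟪y, η⟫ := by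
      simp only [innerₛₗ_apply_apply] at hi
      linarith

theorem ae_iInf_norm_sub_sq_le_of_measure_compl_convexHull {E ι : Type*} [NormedAddCommGroup E]
    [InnerProductSpace ℝ E] [MeasurableSpace E] {μ : Measure E} {v : ι → E} {r : ℝ}
    (hμ : μ (convexHull ℝ (range v))ᶜ = 0) (hv : ∀ i, ‖v i‖ = r) (y : E) :
    ∀ᵐ η ∂μ, (⨅ i, ‖v i - y‖) ^ 2 ≤ r ^ 2 + ‖y‖ ^ 2 - 2 * ⟪y, η⟫ := by
  filter_upwards [ae_iff.2 hμ] with η hη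
  exact iInf_norm_sub_sq_le_of_mem_convexHull hv hη

theorem integrable_exp_of_ae_nonpos {α : Type*} [MeasurableSpace α] {μ : Measure α}
    [IsFiniteMeasure μ] {f : α → ℝ} (hf : AEStronglyMeasurable f μ) (h : ∀ᵐ a ∂μ, f a ≤ 0) :
    Integrable (fun a => Real.exp (f a)) μ :=
  Integrable.of_bound (Real.continuous_exp.comp_aestronglyMeasurable hf) 1 <| by
    filter_upwards [h] with a ha
    rwa [Real.norm_eq_abs, Real.abs_exp, Real.exp_le_one_iff]

theorem one_le_sqrt_div_of_sq_le {a t : ℝ} (ht : 0 < t) (h : t ^ 2 ≤ a) : 1 ≤ √a / t := by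
  rw [le_div_iff₀ ht, one_mul]
  exact (Real.le_sqrt' ht).2 h

theorem abs_comp_sqrt_div_le_mul_exp {φ : ℝ → ℝ} {M : ℝ} (hM : ∀ u ∈ Icc (0 : ℝ) 1, |φ u| ≤ M)
    (hφ : ∀ s, 1 ≤ s → φ s = 0) {t : ℝ} (ht : 0 < t) (a : ℝ) :
    |φ (√a / t)| ≤ M * Real.exp 4⁻¹ * Real.exp (-a / (4 * t ^ 2)) := by
  rcases le_or_gt a (t ^ 2) with ha | ha
  · have hu : √a / t ∈ Icc (0 : ℝ) 1 :=
      ⟨by positivity, (div_le_one ht).2 ((Real.sqrt_le_left ht.le).2 ha)⟩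
    have hexp : 1 ≤ Real.exp 4⁻¹ * Real.exp (-a / (4 * t ^ 2)) := by
      rw [← Real.exp_add, Real.one_le_exp_iff, neg_div, ← sub_eq_add_neg, sub_nonneg,
        div_le_iff₀ (by positivity)]
      linarith
    have hM0 : 0 ≤ M := (abs_nonneg _).trans (hM _ hu)
    calc |φ (√a / t)| ≤ M := hM _ hu
      _ ≤ M * (Real.exp 4⁻¹ * Real.exp (-a / (4 * t ^ 2))) := le_mul_of_one_le_right hM0 hexp
      _ = _ := by ring
  · have hM0 : 0 ≤ M := (abs_nonneg _).trans (hM 0 ⟨le_rfl, zero_le_one⟩)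
    rw [hφ _ (one_le_sqrt_div_of_sq_le ht ha.le), abs_zero]
    positivity

theorem mul_exp_neg_mul_sq_div_le_self {B c s : ℝ} (hB : 0 ≤ B) (hc : 0 ≤ c) (hs : 0 ≤ s)
    (r : ℝ) : B * Real.exp (-c * r ^ 2 / s) ≤ B :=
  mul_le_of_le_one_right hB <| Real.exp_le_one_iff.2 <|
    div_nonpos_of_nonpos_of_nonneg (by nlinarith [sq_nonneg r]) hs

theorem rpow_neg_eq_mul_two_mul_sq_rpow (Nb : ℝ) {t : ℝ} (ht : 0 < t) :
    t ^ (-Nb) = 2 ^ (Nb / 2) * (2 * t ^ 2) ^ (-(Nb / 2)) := by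
  rw [Real.mul_rpow zero_le_two (sq_nonneg t), ← Real.rpow_natCast, ← Real.rpow_mul ht.le,
    ← mul_assoc, ← Real.rpow_add zero_lt_two]
  norm_num
  ring_nf

theorem abs_rescaled_le_mul_gaussian {φ : ℝ → ℝ} {M : ℝ} (hM : ∀ u ∈ Icc (0 : ℝ) 1, |φ u| ≤ M)
    (hφ : ∀ s, 1 ≤ s → φ s = 0) {ck : ℝ} (hck : ck ≠ 0) (Nb : ℝ) {t : ℝ} (ht : 0 < t) (a : ℝ) :
    |t ^ (-Nb) * φ (√a / t)| ≤ M * Real.exp 4⁻¹ * ck * 2 ^ (Nb / 2) *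
      (ck⁻¹ * (2 * t ^ 2) ^ (-(Nb / 2)) * Real.exp (-a / (4 * t ^ 2))) := by
  rw [abs_mul, abs_of_pos (Real.rpow_pos_of_pos ht _)]
  calc t ^ (-Nb) * |φ (√a / t)|
      ≤ t ^ (-Nb) * (M * Real.exp 4⁻¹ * Real.exp (-a / (4 * t ^ 2))) :=
        mul_le_mul_of_nonneg_left (abs_comp_sqrt_div_le_mul_exp hM hφ ht a) (by positivity)
    _ = _ := by rw [rpow_neg_eq_mul_two_mul_sq_rpow Nb ht]; field_simp

theorem dunkl_translation_radial_bound_general (N : ℕ)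
    (G : Subgroup (EuclideanSpace ℝ (Fin N) ≃ₗᵢ[ℝ] EuclideanSpace ℝ (Fin N)))
    (Nb ck : ℝ) (hck : 0 < ck)
    (φ : ℝ → ℝ) (hφcont : Continuous φ) (hφsupp : ∀ s : ℝ, 1 ≤ s → φ s = 0)
    (μx : EuclideanSpace ℝ (Fin N) → Measure (EuclideanSpace ℝ (Fin N)))
    (hμx : ∀ x, IsProbabilityMeasure (μx x))
    (hμxsupp : ∀ x, μx x (convexHull ℝ (Set.range fun σ : G => σ.1 x))ᶜ = 0)
    (d : EuclideanSpace ℝ (Fin N) → EuclideanSpace ℝ (Fin N) → ℝ)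
    (hd : ∀ x y, d x y = ⨅ σ : G, ‖σ.1 x - y‖)
    (wB : EuclideanSpace ℝ (Fin N) → ℝ → ℝ)
    (hwB : ∀ x r, 0 < r → 0 < wB x r)
    (τΦ : ℝ → EuclideanSpace ℝ (Fin N) → EuclideanSpace ℝ (Fin N) → ℝ)
    (hτ : ∀ t x y, 0 < t → τΦ t x y =
      ∫ η, t ^ (-Nb) * φ (Real.sqrt (‖x‖ ^ 2 + ‖y‖ ^ 2 - 2 * ⟪y, η⟫) / t) ∂(μx x))
    (h : ℝ → EuclideanSpace ℝ (Fin N) → EuclideanSpace ℝ (Fin N) → ℝ)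
    (hh : ∀ s x y, 0 < s → h s x y =
      ∫ η, ck⁻¹ * (2 * s) ^ (-(Nb / 2)) *
        Real.exp (-(‖x‖ ^ 2 + ‖y‖ ^ 2 - 2 * ⟪y, η⟫) / (4 * s)) ∂(μx x))
    (C c : ℝ) (hC : 0 < C) (hc : 0 < c)
    (hheat : ∀ s x y, 0 < s → h s x y ≤
      C * (max (wB x (Real.sqrt s)) (wB y (Real.sqrt s)))⁻¹ *
        (1 + ‖x - y‖ / Real.sqrt s) ^ (-(2 : ℝ)) * Real.exp (-c * d x y ^ 2 / s)) :
    ∃ C' : ℝ, 0 < C' ∧ ∀ t x y, 0 < t →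
      (|τΦ t x y| ≤ C' * (max (wB x t) (wB y t))⁻¹ * (1 + ‖x - y‖ / t) ^ (-(2 : ℝ))) ∧
      (d x y > t → τΦ t x y = 0) := by
  obtain ⟨M0, hM0⟩ := (isCompact_Icc (a := (0 : ℝ)) (b := 1)).exists_bound_of_continuousOn
    hφcont.continuousOn
  have hM : ∀ u ∈ Icc (0 : ℝ) 1, |φ u| ≤ max M0 1 :=
    fun u hu => (hM0 u hu).trans (le_max_left _ _)
  have hA : ∀ x y, ∀ᵐ η ∂μx x, d x y ^ 2 ≤ ‖x‖ ^ 2 + ‖y‖ ^ 2 - 2 * ⟪y, η⟫ := fun x y => by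
    rw [hd]
    exact ae_iInf_norm_sub_sq_le_of_measure_compl_convexHull (hμxsupp x) (fun σ => σ.1.norm_map x) y
  set K := max M0 1 * Real.exp 4⁻¹ * ck * 2 ^ (Nb / 2)
  refine ⟨K * C, by positivity, fun t x y ht => ⟨?_, fun hdt => ?_⟩⟩
  · have hint : Integrable (fun η => ck⁻¹ * (2 * t ^ 2) ^ (-(Nb / 2)) *
        Real.exp (-(‖x‖ ^ 2 + ‖y‖ ^ 2 - 2 * ⟪y, η⟫) / (4 * t ^ 2))) (μx x) := by
      refine (integrable_exp_of_ae_nonpos (by fun_prop) ?_).const_mul _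
      filter_upwards [hA x y] with η hη
      exact div_nonpos_of_nonpos_of_nonneg (by nlinarith) (by positivity)
    have hV := hwB x t ht
    calc |τΦ t x y| ≤ K * h (t ^ 2) x y := by
          rw [hτ t x y ht, hh _ x y (by positivity), ← integral_const_mul, ← Real.norm_eq_abs]
          refine norm_integral_le_of_norm_le (hint.const_mul K) (.of_forall fun η => ?_)
          exact abs_rescaled_le_mul_gaussian hM hφsupp hck.ne' Nb ht _
      _ ≤ K * (C * (max (wB x t) (wB y t))⁻¹ * (1 + ‖x - y‖ / t) ^ (-(2 : ℝ))) := by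
          gcongr
          have := hheat (t ^ 2) x y (by positivity)
          rw [Real.sqrt_sq ht.le] at this
          exact this.trans (mul_exp_neg_mul_sq_div_le_self (by positivity) hc.le (by positivity) _)
      _ = K * C * (max (wB x t) (wB y t))⁻¹ * (1 + ‖x - y‖ / t) ^ (-(2 : ℝ)) := by ring
  · rw [hτ t x y ht]
    refine integral_eq_zero_of_ae ?_
    filter_upwards [hA x y] with η hη
    have hsq : t ^ 2 ≤ d x y ^ 2 := pow_le_pow_left₀ ht.le hdt.le 2
    rw [Pi.zero_apply, hφsupp _ (one_le_sqrt_div_of_sq_le ht (hsq.trans hη)), mul_zero]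

/-- Bound for Dunkl translations of continuous radial functions supported in the unit
ball: `|τ_x Φ_t(-y)| ≤ C' V(x,y,t)⁻¹ (1 + ‖x-y‖/t)⁻²`, and the translation vanishes
when `d(x,y) > t`. -/
theorem dunkl_translation_radial_bound (N : ℕ)
    (G : Subgroup (EuclideanSpace ℝ (Fin N) ≃ₗᵢ[ℝ] EuclideanSpace ℝ (Fin N)))
    (hGfin : Finite G)
    (Nb ck : ℝ) (hck : 0 < ck)
    (φ : ℝ → ℝ) (hφcont : Continuous φ) (hφsupp : ∀ s : ℝ, 1 ≤ s → φ s = 0)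
    (μx : EuclideanSpace ℝ (Fin N) → Measure (EuclideanSpace ℝ (Fin N)))
    (hμx : ∀ x, IsProbabilityMeasure (μx x))
    (hμxsupp : ∀ x, μx x (convexHull ℝ (Set.range fun σ : G => σ.1 x))ᶜ = 0)
    (d : EuclideanSpace ℝ (Fin N) → EuclideanSpace ℝ (Fin N) → ℝ)
    (hd : ∀ x y, d x y = ⨅ σ : G, ‖σ.1 x - y‖)
    (wB : EuclideanSpace ℝ (Fin N) → ℝ → ℝ)
    (hwB : ∀ x r, 0 < r → 0 < wB x r)
    (τΦ : ℝ → EuclideanSpace ℝ (Fin N) → EuclideanSpace ℝ (Fin N) → ℝ)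
    (hτ : ∀ t x y, 0 < t → τΦ t x y =
      ∫ η, t ^ (-Nb) * φ (Real.sqrt (‖x‖ ^ 2 + ‖y‖ ^ 2 - 2 * ⟪y, η⟫) / t) ∂(μx x))
    (h : ℝ → EuclideanSpace ℝ (Fin N) → EuclideanSpace ℝ (Fin N) → ℝ)
    (hh : ∀ s x y, 0 < s → h s x y =
      ∫ η, ck⁻¹ * (2 * s) ^ (-(Nb / 2)) *
        Real.exp (-(‖x‖ ^ 2 + ‖y‖ ^ 2 - 2 * ⟪y, η⟫) / (4 * s)) ∂(μx x))
    (C c : ℝ) (hC : 0 < C) (hc : 0 < c)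
    (hheat : ∀ s x y, 0 < s → h s x y ≤
      C * (max (wB x (Real.sqrt s)) (wB y (Real.sqrt s)))⁻¹ *
        (1 + ‖x - y‖ / Real.sqrt s) ^ (-(2 : ℝ)) * Real.exp (-c * d x y ^ 2 / s)) :
    ∃ C' : ℝ, 0 < C' ∧ ∀ t x y, 0 < t →
      (|τΦ t x y| ≤ C' * (max (wB x t) (wB y t))⁻¹ * (1 + ‖x - y‖ / t) ^ (-(2 : ℝ))) ∧
      (d x y > t → τΦ t x y = 0) :=
  dunkl_translation_radial_bound_general N G Nb ck hck φ hφcont hφsupp μx hμx hμxsupp d hd wB hwB τΦ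
    hτ h hh C c hC hc hheat
end

section
/- Subordination bound for small u: if N ≥ 2 and the heat kernel satisfies h_s(x,y) ≤ C w(B(x,√s))^{-1} s/(‖x−y‖² + s), and the volume growth bound w(B(x,t))/w(B(x, t/(2√u))) ≤ C (2√u)^N holds for 0 < u ≤ 1/4, then for ‖x−y‖ ≥ t > 0, the subordinated integral π^{-1/2}∫_0^∞ e^{-u} h_{t²/(4u)}(x,y) u^{-1/2} du is bounded by C' w(B(x,t))^{-1} t²/‖x−y‖². -/
/-!
With `s = t² / (4u)` we have `√s = t / (2√u)`, so the heat kernel bound gives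
`h_s(x,y) ≤ C w(B(x, t/(2√u)))⁻¹ s / ‖x - y‖²`, and volume growth trades
`w(B(x, t/(2√u)))⁻¹` for `C (2√u)^p w(B(x,t))⁻¹`, with `p = N` for `u ≤ 1/4` (the radius exceeds
`t`) and `p = Nb` beyond. The integrand is then at most `w(B(x,t))⁻¹ t² / ‖x - y‖²` times a
multiple of `e^{-u} u^{p/2 - 3/2}`, integrable near `0` since `N ≥ 2` and near `∞` thanks to `e^{-u}`.
-/

open MeasureTheory Real Set Filter Asymptotics

noncomputable def growthExponent (N Nb u : ℝ) : ℝ := if u ≤ 1 / 4 then N else Nb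

noncomputable def subordinationMajorant (N Nb u : ℝ) : ℝ :=
  2 ^ growthExponent N Nb u * (exp (-u) * u ^ (growthExponent N Nb u / 2 - 3 / 2))

lemma subordinationMajorant_nonneg (N Nb : ℝ) {u : ℝ} (hu : 0 ≤ u) :
    0 ≤ subordinationMajorant N Nb u := by
  unfold subordinationMajorant
  positivity

lemma integrableOn_exp_neg_mul_rpow_Ioi {a : ℝ} (ha : 0 < a) (s : ℝ) :
    IntegrableOn (fun u : ℝ => exp (-u) * u ^ s) (Ioi a) := by
  refine integrable_of_isBigO_exp_neg one_half_pos (fun u hu => ?_) ?_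
  · have hu0 : u ≠ 0 := (ha.trans_le hu).ne'
    exact (continuous_exp.comp continuous_neg).continuousWithinAt.mul
      (continuousAt_rpow_const u s (Or.inl hu0)).continuousWithinAt
  · have hpow := (isLittleO_rpow_exp_pos_mul_atTop s one_half_pos).isBigO
    refine ((isBigO_refl (fun u : ℝ => exp (-u)) atTop).mul hpow).congr_right fun u => ?_
    rw [← exp_add]
    ring_nf

lemma integrableOn_subordinationMajorant {N : ℝ} (hN : 1 < N) (Nb : ℝ) :
    IntegrableOn (subordinationMajorant N Nb) (Ioi 0) := by
  rw [← Ioc_union_Ioi_eq_Ioi (by norm_num : (0 : ℝ) ≤ 1 / 4)]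
  refine IntegrableOn.union ?_ ?_
  · have hΓ : IntegrableOn (fun u : ℝ => 2 ^ N * (exp (-u) * u ^ (N / 2 - 1 / 2 - 1))) (Ioi 0) :=
      (GammaIntegral_convergent (by linarith)).const_mul _
    refine (hΓ.mono_set Ioc_subset_Ioi_self).congr_fun (fun u hu => ?_) measurableSet_Ioc
    simp only [subordinationMajorant, growthExponent, if_pos hu.2]
    ring_nf
  · have hexp :
        IntegrableOn (fun u : ℝ => 2 ^ Nb * (exp (-u) * u ^ (Nb / 2 - 3 / 2))) (Ioi (1 / 4)) :=
      (integrableOn_exp_neg_mul_rpow_Ioi (by norm_num) _).const_mul _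
    refine hexp.congr_fun (fun u hu => ?_) measurableSet_Ioi
    simp only [subordinationMajorant, growthExponent, if_neg (not_le.2 (mem_Ioi.1 hu))]

lemma two_mul_sqrt_rpow {u : ℝ} (hu : 0 ≤ u) (p : ℝ) : (2 * √u) ^ p = 2 ^ p * u ^ (p / 2) := by
  rw [mul_rpow zero_le_two (sqrt_nonneg u), sqrt_eq_rpow, ← rpow_mul hu]
  ring_nf

lemma sqrt_sq_div_four_mul {t u : ℝ} (ht : 0 ≤ t) (hu : 0 ≤ u) :
    √(t ^ 2 / (4 * u)) = t / (2 * √u) := by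
  rw [sqrt_div' _ (by positivity), sqrt_sq ht, sqrt_mul zero_le_four,
    show (4 : ℝ) = 2 ^ 2 by norm_num, sqrt_sq zero_le_two]

lemma volume_ratio_le_growthExponent {E : Type*} {wB : E → ℝ → ℝ} {C : ℝ} {N : ℕ} {Nb : ℝ}
    (hvol : ∀ (x : E) (t u : ℝ), 0 < t → 0 < u → u ≤ 1 / 4 →
      wB x t / wB x (t / (2 * √u)) ≤ C * (2 * √u) ^ N)
    (hgrow : ∀ (x : E) (r₁ r₂ : ℝ), 0 < r₁ → r₁ < r₂ → wB x r₂ / wB x r₁ ≤ C * (r₂ / r₁) ^ Nb)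
    {x : E} {t u : ℝ} (ht : 0 < t) (hu : 0 < u) :
    wB x t / wB x (t / (2 * √u)) ≤ C * (2 * √u) ^ growthExponent N Nb u := by
  unfold growthExponent
  split_ifs with hu4
  · rw [rpow_natCast]
    exact hvol x t u ht hu hu4
  · have h2u : 1 < 2 * √u := by
      have : 1 / 2 < √u := (lt_sqrt (by norm_num)).2 (by linarith)
      linarith
    have hgr := hgrow x _ t (by positivity) (div_lt_self ht h2u)
    rwa [div_div_cancel₀ ht.ne'] at hgr

section

variable {E : Type*} [NormedAddCommGroup E] {wB : E → ℝ → ℝ} {h : ℝ → E → E → ℝ} {C : ℝ}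

lemma heat_le_of_volume_ratio_le (hwpos : ∀ x r, 0 < r → 0 < wB x r) (hC : 0 ≤ C)
    (hh : ∀ s x y, 0 < s → h s x y ≤ C * (wB x (√s))⁻¹ * (s / (‖x - y‖ ^ 2 + s)))
    {s t K : ℝ} {x y : E} (hs : 0 < s) (ht : 0 < t) (hxy : 0 < ‖x - y‖)
    (hratio : wB x t / wB x √s ≤ K) :
    h s x y ≤ C * K * (wB x t)⁻¹ * (s / ‖x - y‖ ^ 2) := by
  have hw := hwpos x _ (sqrt_pos.2 hs)
  have hwt := hwpos x t ht
  have hK : 0 ≤ K := (div_pos hwt hw).le.trans hratio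
  have hinv : (wB x √s)⁻¹ ≤ K * (wB x t)⁻¹ :=
    calc (wB x √s)⁻¹ = wB x t / wB x √s * (wB x t)⁻¹ := by field_simp
      _ ≤ K * (wB x t)⁻¹ := by gcongr
  have hfrac : s / (‖x - y‖ ^ 2 + s) ≤ s / ‖x - y‖ ^ 2 :=
    div_le_div_of_nonneg_left hs.le (by positivity) (le_add_of_nonneg_right hs.le)
  calc h s x y ≤ C * (wB x √s)⁻¹ * (s / (‖x - y‖ ^ 2 + s)) := hh s x y hs
    _ ≤ C * (K * (wB x t)⁻¹) * (s / ‖x - y‖ ^ 2) := by gcongr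
    _ = C * K * (wB x t)⁻¹ * (s / ‖x - y‖ ^ 2) := by ring

lemma subordination_integrand_le (hwpos : ∀ x r, 0 < r → 0 < wB x r) (hC : 0 ≤ C)
    (hh : ∀ s x y, 0 < s → h s x y ≤ C * (wB x (√s))⁻¹ * (s / (‖x - y‖ ^ 2 + s)))
    {p t u : ℝ} {x y : E} (hu : 0 < u) (ht : 0 < t) (hxy : 0 < ‖x - y‖)
    (hratio : wB x t / wB x (t / (2 * √u)) ≤ C * (2 * √u) ^ p) :
    exp (-u) * h (t ^ 2 / (4 * u)) x y * u ^ (-(1 : ℝ) / 2) ≤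
      (wB x t)⁻¹ * (t ^ 2 / ‖x - y‖ ^ 2) *
        (C ^ 2 / 4 * (2 ^ p * (exp (-u) * u ^ (p / 2 - 3 / 2)))) := by
  rw [← sqrt_sq_div_four_mul ht.le hu.le] at hratio
  have hk := heat_le_of_volume_ratio_le hwpos hC hh (by positivity) ht hxy hratio
  calc exp (-u) * h (t ^ 2 / (4 * u)) x y * u ^ (-(1 : ℝ) / 2)
      ≤ exp (-u) * (C * (C * (2 * √u) ^ p) * (wB x t)⁻¹ * (t ^ 2 / (4 * u) / ‖x - y‖ ^ 2)) *
          u ^ (-(1 : ℝ) / 2) := by gcongr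
    _ = _ := by
      rw [two_mul_sqrt_rpow hu.le, show p / 2 - 3 / 2 = p / 2 + (-1) + (-(1 : ℝ) / 2) by ring,
        rpow_add hu, rpow_add hu, rpow_neg_one]
      field_simp

lemma subordination_integral_le {N : ℕ} (hN : 2 ≤ N) {Nb : ℝ}
    (hwpos : ∀ x r, 0 < r → 0 < wB x r) (hnn : ∀ s x y, 0 < s → 0 ≤ h s x y) (hC : 0 ≤ C)
    (hh : ∀ s x y, 0 < s → h s x y ≤ C * (wB x (√s))⁻¹ * (s / (‖x - y‖ ^ 2 + s)))
    (hvol : ∀ (x : E) (t u : ℝ), 0 < t → 0 < u → u ≤ 1 / 4 →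
      wB x t / wB x (t / (2 * √u)) ≤ C * (2 * √u) ^ N)
    (hgrow : ∀ (x : E) (r₁ r₂ : ℝ), 0 < r₁ → r₁ < r₂ → wB x r₂ / wB x r₁ ≤ C * (r₂ / r₁) ^ Nb)
    {t : ℝ} {x y : E} (ht : 0 < t) (hxy : 0 < ‖x - y‖) :
    ∫ u in Ioi (0 : ℝ), exp (-u) * h (t ^ 2 / (4 * u)) x y * u ^ (-(1 : ℝ) / 2) ≤
      (wB x t)⁻¹ * (t ^ 2 / ‖x - y‖ ^ 2) *
        (C ^ 2 / 4 * ∫ u in Ioi (0 : ℝ), subordinationMajorant N Nb u) := by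
  have hN' : (1 : ℝ) < N := by exact_mod_cast hN
  rw [← integral_const_mul, ← integral_const_mul]
  refine integral_mono_of_nonneg ?_
    (((integrableOn_subordinationMajorant hN' Nb).const_mul _).const_mul _) ?_
  · filter_upwards [ae_restrict_mem measurableSet_Ioi] with u (hu : 0 < u)
    have := hnn (t ^ 2 / (4 * u)) x y (by positivity)
    positivity
  · filter_upwards [ae_restrict_mem measurableSet_Ioi] with u (hu : 0 < u)
    exact subordination_integrand_le hwpos hC hh hu ht hxy
      (volume_ratio_le_growthExponent hvol hgrow ht hu)

end

/-- Subordination bound: for `N ≥ 2` and `‖x-y‖ ≥ t`, the subordinated Poisson-type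
integral of the heat kernel is bounded by `C' w(B(x,t))⁻¹ t²/‖x-y‖²`. -/
theorem subordination_small_u_bound (N : ℕ) (hN : 2 ≤ N) (Nb : ℝ)
    (wB : EuclideanSpace ℝ (Fin N) → ℝ → ℝ)
    (hwpos : ∀ x r, 0 < r → 0 < wB x r)
    (h : ℝ → EuclideanSpace ℝ (Fin N) → EuclideanSpace ℝ (Fin N) → ℝ)
    (hnn : ∀ s x y, 0 < s → 0 ≤ h s x y)
    (C : ℝ) (hC : 0 < C)
    (hh : ∀ s x y, 0 < s →
      h s x y ≤ C * (wB x (Real.sqrt s))⁻¹ * (s / (‖x - y‖ ^ 2 + s)))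
    (hvol : ∀ (x : EuclideanSpace ℝ (Fin N)) (t u : ℝ), 0 < t → 0 < u → u ≤ 1 / 4 →
      wB x t / wB x (t / (2 * Real.sqrt u)) ≤ C * (2 * Real.sqrt u) ^ N)
    (hgrow : ∀ (x : EuclideanSpace ℝ (Fin N)) (r₁ r₂ : ℝ), 0 < r₁ → r₁ < r₂ →
      C⁻¹ * (r₂ / r₁) ^ N ≤ wB x r₂ / wB x r₁ ∧
        wB x r₂ / wB x r₁ ≤ C * (r₂ / r₁) ^ Nb) :
    ∃ C' : ℝ, 0 < C' ∧ ∀ (t : ℝ) (x y : EuclideanSpace ℝ (Fin N)),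
      0 < t → t ≤ ‖x - y‖ →
      Real.pi ^ (-(1 : ℝ) / 2) *
          (∫ u in Set.Ioi (0 : ℝ),
            Real.exp (-u) * h (t ^ 2 / (4 * u)) x y * u ^ (-(1 : ℝ) / 2)) ≤
        C' * (wB x t)⁻¹ * (t ^ 2 / ‖x - y‖ ^ 2) := by
  set K := π ^ (-(1 : ℝ) / 2) * (C ^ 2 / 4 * ∫ u in Ioi (0 : ℝ), subordinationMajorant N Nb u)
    with hK_def
  have hK : 0 ≤ K := by
    have := setIntegral_nonneg (μ := volume) measurableSet_Ioi fun u (hu : 0 < u) ↦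
      subordinationMajorant_nonneg N Nb hu.le
    positivity
  refine ⟨K + 1, by positivity, fun t x y ht htxy => ?_⟩
  have hxy : 0 < ‖x - y‖ := ht.trans_le htxy
  have hM : 0 ≤ (wB x t)⁻¹ * (t ^ 2 / ‖x - y‖ ^ 2) := by
    have := hwpos x t ht
    positivity
  have hint := subordination_integral_le hN hwpos hnn hC.le hh hvol
    (fun x r₁ r₂ h₁ h₂ ↦ (hgrow x r₁ r₂ h₁ h₂).2) ht hxy
  calc π ^ (-(1 : ℝ) / 2) *
        (∫ u in Ioi (0 : ℝ), exp (-u) * h (t ^ 2 / (4 * u)) x y * u ^ (-(1 : ℝ) / 2))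
      ≤ π ^ (-(1 : ℝ) / 2) * ((wB x t)⁻¹ * (t ^ 2 / ‖x - y‖ ^ 2) *
          (C ^ 2 / 4 * ∫ u in Ioi (0 : ℝ), subordinationMajorant N Nb u)) := by gcongr
    _ = K * ((wB x t)⁻¹ * (t ^ 2 / ‖x - y‖ ^ 2)) := by rw [hK_def]; ring
    _ ≤ (K + 1) * ((wB x t)⁻¹ * (t ^ 2 / ‖x - y‖ ^ 2)) := by gcongr; linarith
    _ = (K + 1) * (wB x t)⁻¹ * (t ^ 2 / ‖x - y‖ ^ 2) := by ring
end
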